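/- Let Q be a finite type with a colouring c : Q → Bool, g(s) = N_w(s) − N_b(s) for finsets s ⊆ Q, α ⊆ Q a finset, and G a finite set of finsets of Q containing ∅ and closed under symmetric difference. Define v : (Q → ZMod 2) → ℂ by v = Σ_{B ∈ G} I^{g(α∩B)} · δ_{χ_B}. If β ∈ G satisfies I^{g(α∩β)} = 1 and |α∩β∩B| is even for every B ∈ G, then the translation operator sending each δ_x to δ_{x+χ_β} fixes v. (In the 3D colour code this says that after an S-error membrane A_α, any stabiliser X_β not on the membrane boundary, and the product of all boundary generators of one colour, have the resulting state as a +1 eigenstate.) -/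
import Mathlib


/-- Number of white elements of a finset. -/
def Nw {Q : Type*} (c : Q → Bool) (s : Finset Q) : ℕ :=
  (s.filter (fun q => c q = true)).card

/-- Number of black elements of a finset. -/
def Nb {Q : Type*} (c : Q → Bool) (s : Finset Q) : ℕ :=
  (s.filter (fun q => c q = false)).card

/-- g(s) = N_w(s) − N_b(s). -/
def gdiff {Q : Type*} (c : Q → Bool) (s : Finset Q) : ℤ :=
  (Nw c s : ℤ) - (Nb c s : ℤ)

/-- Indicator bit string of a finset. -/
def chi {Q : Type*} [DecidableEq Q] (s : Finset Q) : Q → ZMod 2 :=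
  fun q => if q ∈ s then 1 else 0

/-- The state A_α|0̄⟩ obtained by applying the S/S† error pattern on α to the
colour-code codestate with X stabiliser group G:
v = Σ_{B ∈ G} I^{g(α∩B)} δ_{χ_B}. -/
noncomputable def sState {Q : Type*} [DecidableEq Q] [Fintype Q] (c : Q → Bool)
    (α : Finset Q) (G : Finset (Finset Q)) : (Q → ZMod 2) → ℂ :=
  fun x => ∑ B ∈ G,
    Complex.I ^ (gdiff c (α ∩ B)) * (if x = chi B then 1 else 0)

lemma filter_symmDiff' {Q : Type*} [DecidableEq Q] (p : Q → Prop) [DecidablePred p]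
    (A B : Finset Q) : (symmDiff A B).filter p = symmDiff (A.filter p) (B.filter p) := by
  ext q
  simp [Finset.mem_symmDiff, Finset.mem_filter]
  tauto

lemma card_symmDiff' {Q : Type*} [DecidableEq Q] (A B : Finset Q) :
    (symmDiff A B).card + 2 * (A ∩ B).card = A.card + B.card := by
  have h1 := Finset.card_sdiff_add_card_inter A B
  have h2 := Finset.card_sdiff_add_card_inter B A
  have hd : symmDiff A B = (A \ B) ∪ (B \ A) := by
    ext q; simp [Finset.mem_symmDiff]
  have hdis : Disjoint (A \ B) (B \ A) := by
    rw [Finset.disjoint_left]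
    intro a ha hb
    simp only [Finset.mem_sdiff] at ha hb
    exact hb.2 ha.1
  rw [hd, Finset.card_union_of_disjoint hdis]
  rw [Finset.inter_comm B A] at h2
  omega

lemma Nw_symmDiff {Q : Type*} [DecidableEq Q] (c : Q → Bool) (A B : Finset Q) :
    Nw c (symmDiff A B) + 2 * Nw c (A ∩ B) = Nw c A + Nw c B := by
  unfold Nw
  rw [filter_symmDiff', Finset.filter_inter_distrib]
  exact card_symmDiff' _ _

lemma Nb_symmDiff {Q : Type*} [DecidableEq Q] (c : Q → Bool) (A B : Finset Q) :
    Nb c (symmDiff A B) + 2 * Nb c (A ∩ B) = Nb c A + Nb c B := by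
  unfold Nb
  rw [filter_symmDiff', Finset.filter_inter_distrib]
  exact card_symmDiff' _ _

lemma gdiff_symmDiff {Q : Type*} [DecidableEq Q] (c : Q → Bool) (A B : Finset Q) :
    gdiff c (symmDiff A B) = gdiff c A + gdiff c B - 2 * gdiff c (A ∩ B) := by
  have h1 := Nw_symmDiff c A B
  have h2 := Nb_symmDiff c A B
  unfold gdiff
  omega

lemma even_gdiff {Q : Type*} [DecidableEq Q] (c : Q → Bool) (s : Finset Q)
    (h : Even s.card) : Even (gdiff c s) := by
  have := Finset.card_filter_add_card_filter_not (s := s)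
    (p := fun q => c q = true)
  have heq : (Finset.filter (fun q => ¬ c q = true) s) =
      (Finset.filter (fun q => c q = false) s) := by
    apply Finset.filter_congr; intro q _; simp
  rw [heq] at this
  unfold gdiff Nw Nb
  rcases h with ⟨k, hk⟩
  rw [hk] at this
  rcases Nat.even_or_odd ((Finset.filter (fun q => c q = true) s).card) with he | ho
  · rcases he with ⟨m, hm⟩
    exact ⟨(m : ℤ) - k + m, by push_cast [hm]; omega⟩
  · rcases ho with ⟨m, hm⟩
    exact ⟨(m : ℤ) + 1 - k + m, by push_cast [hm]; omega⟩

lemma chi_symmDiff {Q : Type*} [DecidableEq Q] (A B : Finset Q) :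
    chi (symmDiff A B) = chi A + chi B := by
  funext q
  simp only [chi, Pi.add_apply, Finset.mem_symmDiff]
  by_cases hA : q ∈ A <;> by_cases hB : q ∈ B <;> simp [hA, hB] <;> decide

theorem stmt_7 {Q : Type*} [DecidableEq Q] [Fintype Q] (c : Q → Bool)
    (α : Finset Q) (G : Finset (Finset Q))
    (h_empty : ∅ ∈ G) (h_closed : ∀ A ∈ G, ∀ B ∈ G, symmDiff A B ∈ G)
    (β : Finset Q) (hβ : β ∈ G)
    (hphase : Complex.I ^ (gdiff c (α ∩ β)) = 1)
    (heven : ∀ B ∈ G, Even ((α ∩ β ∩ B).card)) :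
    (fun x : Q → ZMod 2 => sState c α G (x + chi β)) = sState c α G := by
  funext x
  unfold sState
  refine Finset.sum_nbij' (i := fun B => symmDiff B β) (j := fun B => symmDiff B β)
    (fun B hB => h_closed B hB β hβ) (fun B hB => h_closed B hB β hβ)
    (fun B _ => by simp [symmDiff_symmDiff_cancel_right])
    (fun B _ => by simp [symmDiff_symmDiff_cancel_right])
    ?_
  intro B hB
  have hinter : α ∩ symmDiff B β = symmDiff (α ∩ B) (α ∩ β) :=
    inf_symmDiff_distrib_left α B β
  have hcap : (α ∩ B) ∩ (α ∩ β) = α ∩ β ∩ B := by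
    ext q; simp [Finset.mem_inter]; tauto
  have heg : Even (gdiff c ((α ∩ B) ∩ (α ∩ β))) := by
    rw [hcap]; exact even_gdiff c _ (heven B hB)
  have hphase2 : Complex.I ^ (gdiff c (α ∩ symmDiff B β)) =
      Complex.I ^ (gdiff c (α ∩ B)) := by
    rw [hinter, gdiff_symmDiff, sub_eq_add_neg, zpow_add₀ Complex.I_ne_zero,
      zpow_add₀ Complex.I_ne_zero, hphase, zpow_neg, zpow_mul]
    have : (Complex.I ^ (2 : ℤ)) = -1 := by
      norm_num [zpow_two, Complex.I_mul_I]
    rw [this, heg.neg_one_zpow]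
    ring
  have hzero : chi β + chi β = 0 := by
    funext q; exact CharTwo.add_self_eq_zero _
  have hif : (x + chi β = chi B) ↔ (x = chi (symmDiff B β)) := by
    rw [chi_symmDiff]
    constructor
    · intro h
      rw [← h, add_assoc, hzero, add_zero]
    · intro h
      rw [h, add_assoc, hzero, add_zero]
  rw [hphase2]
  congr 1
  simp only [hif]
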